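/- arXiv:2508.18140 — 5 statements merged into one kernel-verified Lean document; each statement's English description precedes it below -/
import Mathlib

section
/- For every T > 0 there exists a constant C = C(T) > 0 with the following property. Let B = (B_s)_{s≥0} be a standard real Brownian motion on a probability space (with B_0 = 0, continuous paths, and independent increments B_t − B_s distributed as a centered Gaussian of variance t − s). Let h̄ : ℝ → ℝ be bounded continuous with h̄(y) ≥ 0 for all y ∈ [−1, 1], and let ξ : [0,T] × ℝ → ℝ be bounded continuous. Then for all t ∈ (0, T] and x ∈ ℝ: log E[ exp( h̄(x + B_t) + ∫_0^t ξ(t − s, x + B_s) ds ) ] ≥ −∫_0^t sup_{y∈ℝ} |ξ(s, y)| ds − C·(1 + 1_{|x|>1}·x²/t). -/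
/-!
On the event `|x + B_t| ≤ 1` the initial condition is nonnegative and the forcing term is at
least `-∫₀ᵗ sup_y |ξ(s, y)| ds`, so the expectation is at least `exp (-∫₀ᵗ sup |ξ|)` times
`P(x + B_t ∈ [-1, 1])`. That Gaussian probability is at least the mass of a subinterval of width
`√(min 1 t)` through a point `c ∈ [-1 - x, 1 - x]` with `c² ≤ 1_{|x|>1} x²` (`c = -x` or `c = 0`),
which is at least `exp (-c²/t - 1) / √(2π max T 1)`.
-/

open MeasureTheory ProbabilityTheory Real

lemma gaussianPDFReal_zero_le_of_abs_le {v : NNReal} {y z : ℝ} (h : |y| ≤ |z|) :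
    gaussianPDFReal 0 v z ≤ gaussianPDFReal 0 v y := by
  simp only [gaussianPDFReal, sub_zero]
  have : y ^ 2 ≤ z ^ 2 := sq_le_sq.mpr h
  gcongr ?_ * exp ?_
  exact div_le_div_of_nonneg_right (neg_le_neg this) (by positivity)

lemma exists_Icc_add_subset_Icc_mem {p q c L : ℝ} (hc : c ∈ Set.Icc p q) (hL : 0 ≤ L)
    (hLpq : L ≤ q - p) :
    ∃ a, Set.Icc a (a + L) ⊆ Set.Icc p q ∧ c ∈ Set.Icc a (a + L) := by
  refine ⟨min c (q - L), Set.Icc_subset_Icc ?_ ?_, min_le_left _ _, ?_⟩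
  · exact le_min hc.1 (by linarith)
  · linarith [min_le_right c (q - L)]
  · rcases min_choice c (q - L) with h | h <;> rw [h] <;> linarith [hc.2]

lemma mul_gaussianPDFReal_le_gaussianReal_real_Icc {v : NNReal} (hv : v ≠ 0) {a b m : ℝ}
    (hab : a ≤ b) (hm : ∀ y ∈ Set.Icc a b, |y| ≤ |m|) :
    (b - a) * gaussianPDFReal 0 v m ≤ (gaussianReal 0 v).real (Set.Icc a b) := by
  rw [measureReal_def, gaussianReal_apply_eq_integral 0 hv,
    ENNReal.toReal_ofReal (integral_nonneg (gaussianPDFReal_nonneg 0 v))]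
  have := setIntegral_ge_of_const_le_real (μ := volume) measurableSet_Icc
    measure_Icc_lt_top.ne (fun y hy => gaussianPDFReal_zero_le_of_abs_le (v := v) (hm y hy))
    (integrable_gaussianPDFReal 0 v).integrableOn
  rwa [Real.volume_real_Icc_of_le hab, mul_comm] at this

lemma mul_gaussianPDFReal_le_gaussianReal_real_Icc_of_mem {v : NNReal} (hv : v ≠ 0)
    {p q c L : ℝ} (hc : c ∈ Set.Icc p q) (hL : 0 ≤ L) (hLpq : L ≤ q - p) :
    L * gaussianPDFReal 0 v (|c| + L) ≤ (gaussianReal 0 v).real (Set.Icc p q) := by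
  obtain ⟨a, hsub, hca⟩ := exists_Icc_add_subset_Icc_mem hc hL hLpq
  calc L * gaussianPDFReal 0 v (|c| + L)
      = (a + L - a) * gaussianPDFReal 0 v (|c| + L) := by ring
    _ ≤ (gaussianReal 0 v).real (Set.Icc a (a + L)) := by
      refine mul_gaussianPDFReal_le_gaussianReal_real_Icc hv (by linarith) fun y hy => ?_
      have : |y - c| ≤ L :=
        abs_sub_le_iff.mpr ⟨by linarith [hy.2, hca.1], by linarith [hy.1, hca.2]⟩
      rw [abs_of_nonneg (by positivity : 0 ≤ |c| + L)]
      linarith [abs_sub_abs_le_abs_sub y c]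
    _ ≤ _ := measureReal_mono hsub

lemma le_min_one_mul_max_one {t T : ℝ} (ht : 0 ≤ t) (htT : t ≤ T) : t ≤ min 1 t * max T 1 := by
  rcases le_total t 1 with h | h
  · rw [min_eq_right h]
    exact le_mul_of_one_le_right ht (le_max_right T 1)
  · rw [min_eq_left h, one_mul]
    exact htT.trans (le_max_left T 1)

lemma exp_div_sqrt_le_gaussianReal_real_Icc {t T p q c : ℝ} (ht : 0 < t) (htT : t ≤ T)
    (hc : c ∈ Set.Icc p q) (hpq : 1 ≤ q - p) :
    exp (-c ^ 2 / t - 1) / √(2 * π * max T 1) ≤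
      (gaussianReal 0 t.toNNReal).real (Set.Icc p q) := by
  -- `L² ≤ t` gives `(|c| + L)² / 2t ≤ c²/t + 1`, and `L = min 1 √t` absorbs `1 / √(2π t)`
  set L := √(min 1 t)
  have hL2 : L ^ 2 ≤ t := by
    rw [sq_sqrt (le_min zero_le_one ht.le)]
    exact min_le_right 1 t
  have hL1 : L ≤ 1 := sqrt_le_one.mpr (min_le_left 1 t)
  refine le_trans ?_ (mul_gaussianPDFReal_le_gaussianReal_real_Icc_of_mem
    (by simpa using ht) hc (sqrt_nonneg _) (hL1.trans hpq))
  have hexp : -c ^ 2 / t - 1 ≤ -(|c| + L - 0) ^ 2 / (2 * t) := by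
    rw [div_sub_one ht.ne', div_le_div_iff₀ ht (by positivity)]
    nlinarith [sq_nonneg (|c| - L), sq_abs c]
  have hsqrt : √(2 * π * t) ≤ L * √(2 * π * max T 1) := by
    rw [← sqrt_mul (le_min zero_le_one ht.le)]
    refine sqrt_le_sqrt ?_
    nlinarith [le_min_one_mul_max_one ht.le htT, pi_pos]
  rw [gaussianPDFReal, coe_toNNReal t ht.le, div_eq_mul_inv, mul_comm (exp _), ← mul_assoc]
  gcongr
  rw [← div_eq_mul_inv, le_div_iff₀ (by positivity), inv_mul_le_iff₀ (by positivity)]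
  linarith

section IntegralSup

variable {f : ℝ → ℝ → ℝ} {M : ℝ}

lemma measurable_iSup_abs (hf : Continuous fun p : ℝ × ℝ => f p.1 p.2)
    (hM : ∀ s y, |f s y| ≤ M) : Measurable fun s => ⨆ y, |f s y| :=
  (lowerSemicontinuous_ciSup (fun s => ⟨M, by rintro _ ⟨y, rfl⟩; exact hM s y⟩) fun y =>
    (hf.comp (continuous_id.prodMk continuous_const)).abs.lowerSemicontinuous).measurable

lemma neg_integral_iSup_abs_le_integral_comp_sub_left
    (hf : Continuous fun p : ℝ × ℝ => f p.1 p.2) (hM : ∀ s y, |f s y| ≤ M)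
    {γ : ℝ → ℝ} (hγ : Continuous γ) {t : ℝ} (ht : 0 ≤ t) :
    -(∫ s in (0 : ℝ)..t, ⨆ y, |f s y|) ≤ ∫ s in (0 : ℝ)..t, f (t - s) (γ s) := by
  have hle : ∀ s y, |f s y| ≤ ⨆ y, |f s y| := fun s =>
    le_ciSup (f := fun y => |f s y|) ⟨M, by rintro _ ⟨y, rfl⟩; exact hM s y⟩
  have hint : IntervalIntegrable (fun s => -⨆ y, |f (t - s) y|) volume 0 t := by
    refine (intervalIntegrable_const (c := M)).mono_fun ?_ (ae_of_all _ fun s => ?_)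
    · exact ((measurable_iSup_abs hf hM).comp (measurable_const.sub measurable_id)).neg
        |>.aestronglyMeasurable
    · simp only [norm_neg, Real.norm_eq_abs]
      rw [abs_of_nonneg (Real.iSup_nonneg fun _ => abs_nonneg _)]
      exact (ciSup_le (hM (t - s))).trans (le_abs_self M)
  calc -(∫ s in (0 : ℝ)..t, ⨆ y, |f s y|)
      = ∫ s in (0 : ℝ)..t, -⨆ y, |f (t - s) y| := by
        simp [intervalIntegral.integral_comp_sub_left (fun s => ⨆ y, |f s y|) t]
    _ ≤ ∫ s in (0 : ℝ)..t, f (t - s) (γ s) :=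
        intervalIntegral.integral_mono_on ht hint
          (Continuous.intervalIntegrable
            (hf.comp ((continuous_const.sub continuous_id).prodMk hγ)) 0 t)
          fun s _ => neg_le.mpr ((neg_le_abs _).trans (hle _ _))

end IntegralSup

lemma log_measureReal_sub_le_log_integral_exp {Ω : Type*} [MeasurableSpace Ω] {P : Measure Ω}
    [IsProbabilityMeasure P] {A : Set Ω} {Z : Ω → ℝ} {K : ℝ} (hA : MeasurableSet A)
    (hPA : 0 < P.real A) (hK : 0 ≤ K) (hZ : ∀ ω ∈ A, -K ≤ Z ω) :
    log (P.real A) - K ≤ log (∫ ω, exp (Z ω) ∂P) := by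
  by_cases hint : Integrable (fun ω => exp (Z ω)) P
  · have hset : exp (-K) * P.real A ≤ ∫ ω in A, exp (Z ω) ∂P :=
      setIntegral_ge_of_const_le_real hA (measure_ne_top _ _)
        (fun ω hω => exp_le_exp.mpr (hZ ω hω)) hint.integrableOn
    calc log (P.real A) - K = log (exp (-K) * P.real A) := by
          rw [log_mul (exp_pos _).ne' hPA.ne', log_exp]; ring
      _ ≤ log (∫ ω in A, exp (Z ω) ∂P) := log_le_log (by positivity) hset
      _ ≤ log (∫ ω, exp (Z ω) ∂P) :=
          log_le_log ((by positivity : 0 < exp (-K) * P.real A).trans_le hset)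
            (setIntegral_le_integral hint (ae_of_all _ fun _ => (exp_pos _).le))
  · -- the junk value `∫ = 0` gives `log 0 = 0`, and the left-hand side is `≤ 0`
    rw [integral_undef hint, log_zero]
    linarith [log_nonpos hPA.le measureReal_le_one]

lemma exists_mem_Icc_sq_le (x : ℝ) :
    ∃ c ∈ Set.Icc (-1 - x) (1 - x), c ^ 2 ≤ (if 1 < |x| then (1 : ℝ) else 0) * x ^ 2 := by
  split_ifs with hx
  · exact ⟨-x, ⟨by linarith, by linarith⟩, by simp⟩
  · obtain ⟨hx₁, hx₂⟩ := abs_le.mp (not_lt.mp hx)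
    exact ⟨0, ⟨by linarith, by linarith⟩, by simp⟩

theorem kpz_smooth_coming_up_from_minus_infinity_general (T : ℝ) :
    ∃ C : ℝ, 0 < C ∧
      ∀ (Ω : Type) (_ : MeasurableSpace Ω) (P : Measure Ω), IsProbabilityMeasure P →
      ∀ B : ℝ → Ω → ℝ,
        (∀ s : ℝ, Measurable (B s)) →
        (∀ ω, Continuous fun s => B s ω) →
        (∀ ω, B 0 ω = 0) →
        (∀ s t : ℝ, 0 ≤ s → s ≤ t →
          Measure.map (fun ω => B t ω - B s ω) P = gaussianReal 0 (Real.toNNReal (t - s))) →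
        (∀ (n : ℕ) (τ : ℕ → ℝ), Monotone τ → (∀ i, 0 ≤ τ i) →
          iIndepFun (m := fun _ : Fin n => (inferInstance : MeasurableSpace ℝ))
            (fun (i : Fin n) ω => B (τ (i + 1)) ω - B (τ i) ω) P) →
      ∀ hbar : ℝ → ℝ, Continuous hbar → (∃ M : ℝ, ∀ y, |hbar y| ≤ M) →
        (∀ y ∈ Set.Icc (-1 : ℝ) 1, 0 ≤ hbar y) →
      ∀ ξ : ℝ → ℝ → ℝ, Continuous (fun p : ℝ × ℝ => ξ p.1 p.2) →
        (∃ M : ℝ, ∀ s y, |ξ s y| ≤ M) →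
      ∀ t : ℝ, t ∈ Set.Ioc 0 T → ∀ x : ℝ,
        Real.log (∫ ω, Real.exp (hbar (x + B t ω) +
            ∫ s in (0:ℝ)..t, ξ (t - s) (x + B s ω)) ∂P)
          ≥ -(∫ s in (0:ℝ)..t, ⨆ y : ℝ, |ξ s y|)
              - C * (1 + (if 1 < |x| then (1 : ℝ) else 0) * x ^ 2 / t) := by
  have hlog : 0 ≤ log √(2 * π * max T 1) :=
    log_nonneg (one_le_sqrt.mpr (by nlinarith [pi_gt_three, le_max_right T 1]))
  refine ⟨1 + log √(2 * π * max T 1), by positivity, ?_⟩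
  intro Ω _ P _ B hBmeas hBcont hB0 hgauss _ hbar _ _ hbar0 ξ hξ ⟨M, hM⟩ t ⟨ht, htT⟩ x
  obtain ⟨c, hc, hcx⟩ := exists_mem_Icc_sq_le x
  set A := B t ⁻¹' Set.Icc (-1 - x) (1 - x)
  have hlaw : P.map (B t) = gaussianReal 0 t.toNNReal := by
    simpa [hB0] using hgauss 0 t le_rfl ht.le
  have hPA : exp (-c ^ 2 / t - 1) / √(2 * π * max T 1) ≤ P.real A := by
    rw [← map_measureReal_apply (hBmeas t) measurableSet_Icc, hlaw]
    exact exp_div_sqrt_le_gaussianReal_real_Icc ht htT hc (by linarith)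
  have hZ : ∀ ω ∈ A, -(∫ s in (0:ℝ)..t, ⨆ y, |ξ s y|) ≤
      hbar (x + B t ω) + ∫ s in (0:ℝ)..t, ξ (t - s) (x + B s ω) := fun ω hω => by
    have hforcing := neg_integral_iSup_abs_le_integral_comp_sub_left hξ hM
      (γ := fun s => x + B s ω) (continuous_const.add (hBcont ω)) ht.le
    have hω' : x + B t ω ∈ Set.Icc (-1 : ℝ) 1 := ⟨by linarith [hω.1], by linarith [hω.2]⟩
    linarith [hbar0 _ hω']
  have hkey := log_measureReal_sub_le_log_integral_exp (hBmeas t measurableSet_Icc)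
    ((by positivity : (0 : ℝ) < _).trans_le hPA)
    (intervalIntegral.integral_nonneg ht.le fun _ _ => Real.iSup_nonneg fun _ => abs_nonneg _) hZ
  have hPA_log := log_le_log (by positivity) hPA
  rw [log_div (exp_pos _).ne' (by positivity), log_exp, neg_div] at hPA_log
  have hq : 0 ≤ (if 1 < |x| then (1 : ℝ) else 0) * x ^ 2 / t := by positivity
  have hcq : c ^ 2 / t ≤ (if 1 < |x| then (1 : ℝ) else 0) * x ^ 2 / t := by gcongr
  nlinarith [mul_nonneg hlog hq]

/-- **Coming up from −∞ for the smooth KPZ equation.** For every `T > 0` there is a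
constant `C = C(T) > 0` such that: for every standard Brownian motion `B` (starting
at `0`, with continuous paths, Gaussian increments and independent increments), every
bounded continuous initial condition `h̄ ≥ 0` on `[−1,1]` and every bounded continuous
forcing `ξ`, the Cole–Hopf/Feynman–Kac value
`log E[exp(h̄(x+B_t) + ∫_0^t ξ(t−s, x+B_s) ds)]` is bounded below by
`−∫_0^t sup_y |ξ(s,y)| ds − C (1 + 1_{|x|>1} x²/t)` for all `t ∈ (0,T]`, `x ∈ ℝ`. -/
theorem kpz_smooth_coming_up_from_minus_infinity (T : ℝ) (hT : 0 < T) :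
    ∃ C : ℝ, 0 < C ∧
      ∀ (Ω : Type) (_ : MeasurableSpace Ω) (P : Measure Ω), IsProbabilityMeasure P →
      ∀ B : ℝ → Ω → ℝ,
        (∀ s : ℝ, Measurable (B s)) →
        (∀ ω, Continuous fun s => B s ω) →
        (∀ ω, B 0 ω = 0) →
        (∀ s t : ℝ, 0 ≤ s → s ≤ t →
          Measure.map (fun ω => B t ω - B s ω) P = gaussianReal 0 (Real.toNNReal (t - s))) →
        (∀ (n : ℕ) (τ : ℕ → ℝ), Monotone τ → (∀ i, 0 ≤ τ i) →
          iIndepFun (m := fun _ : Fin n => (inferInstance : MeasurableSpace ℝ))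
            (fun (i : Fin n) ω => B (τ (i + 1)) ω - B (τ i) ω) P) →
      ∀ hbar : ℝ → ℝ, Continuous hbar → (∃ M : ℝ, ∀ y, |hbar y| ≤ M) →
        (∀ y ∈ Set.Icc (-1 : ℝ) 1, 0 ≤ hbar y) →
      ∀ ξ : ℝ → ℝ → ℝ, Continuous (fun p : ℝ × ℝ => ξ p.1 p.2) →
        (∃ M : ℝ, ∀ s y, |ξ s y| ≤ M) →
      ∀ t : ℝ, t ∈ Set.Ioc 0 T → ∀ x : ℝ,
        Real.log (∫ ω, Real.exp (hbar (x + B t ω) +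
            ∫ s in (0:ℝ)..t, ξ (t - s) (x + B s ω)) ∂P)
          ≥ -(∫ s in (0:ℝ)..t, ⨆ y : ℝ, |ξ s y|)
              - C * (1 + (if 1 < |x| then (1 : ℝ) else 0) * x ^ 2 / t) :=
  kpz_smooth_coming_up_from_minus_infinity_general T
end

section
/- For every s > 0 and y ∈ ℝ, the periodic heat kernel satisfies the two-sided bound √(2π/s) · exp( −|y|_𝕋² / (2s) ) ≤ p_𝕋(s, y) ≤ 2·(1 + √(2π/s)) · exp( −|y|_𝕋² / (2s) ). -/
/-!
Since `p_𝕋(s, ·)` is `2π`-periodic and even, `p_𝕋(s, y) = p_𝕋(s, a)` with `a = |y|_𝕋 ∈ [0, π]`,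
and `p_𝕋(s, a) = √(2π/s) ∑ₖ exp(-(a + 2πk)²/(2s))`. The term `k = 0` gives the lower bound.
For `a ∈ [0, π]` one has `(a + 2πk)² ≥ a² + (2πm)²` with `m = k` for `k ≥ 0` and `m = -k - 1`
for `k < 0`, so the sum is at most `2 exp(-a²/(2s)) ∑_{m ≥ 0} exp(-2π²m²/s)`, and the integral
test bounds the last sum by `1 + √(s/(2π))/2`.
-/

open Real

/-- The periodic heat kernel `p_𝕋(s,y) = 2π ∑_{k∈ℤ} (2πs)^{−1/2} exp(−(y+2πk)²/(2s))`. -/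
noncomputable def heatKernelTorus (s y : ℝ) : ℝ :=
  2 * π * ∑' k : ℤ, (Real.sqrt (2 * π * s))⁻¹ * Real.exp (-(y + 2 * π * k) ^ 2 / (2 * s))

/-- The distance to `0` on the torus of circumference `2π`: `|y|_𝕋 = inf_{k∈ℤ} |y − 2πk|`. -/
noncomputable def torusAbs (y : ℝ) : ℝ := ⨅ k : ℤ, |y - 2 * π * k|

open Set MeasureTheory

theorem torusAbs_eq_abs_sub_round (y : ℝ) : torusAbs y = |y - 2 * π * round (y / (2 * π))| := by
  have hπ : 0 < 2 * π := by positivity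
  have hscale (k : ℤ) : |y - 2 * π * k| = 2 * π * |y / (2 * π) - k| := by
    rw [← abs_of_pos hπ, ← abs_mul, abs_of_pos hπ, mul_sub, mul_div_cancel₀ _ hπ.ne']
  refine le_antisymm (ciInf_le ⟨0, ?_⟩ _) (le_ciInf fun k => ?_)
  · rintro _ ⟨k, rfl⟩
    exact abs_nonneg _
  · rw [hscale, hscale]
    exact mul_le_mul_of_nonneg_left (round_le _ k) hπ.le

theorem torusAbs_nonneg (y : ℝ) : 0 ≤ torusAbs y := by
  rw [torusAbs_eq_abs_sub_round]
  exact abs_nonneg _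

theorem torusAbs_le_pi (y : ℝ) : torusAbs y ≤ π := by
  have hπ : 0 < 2 * π := by positivity
  have h := abs_sub_round (y / (2 * π))
  rw [torusAbs_eq_abs_sub_round, show y = 2 * π * (y / (2 * π)) by field_simp,
    mul_div_cancel_left₀ _ hπ.ne', ← mul_sub, abs_mul, abs_of_pos hπ]
  nlinarith

theorem heatKernelTorus_periodic (s : ℝ) : Function.Periodic (heatKernelTorus s) (2 * π) := by
  intro y
  unfold heatKernelTorus
  conv_rhs => rw [← (Equiv.addRight (1 : ℤ)).tsum_eq]
  congr 2 with k
  simp only [Equiv.coe_addRight]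
  push_cast
  ring_nf

theorem heatKernelTorus_even (s : ℝ) : Function.Even (heatKernelTorus s) := by
  intro y
  unfold heatKernelTorus
  rw [← (Equiv.neg ℤ).tsum_eq]
  congr 2 with k
  simp only [Equiv.neg_apply]
  push_cast
  ring_nf

theorem heatKernelTorus_torusAbs (s y : ℝ) :
    heatKernelTorus s (torusAbs y) = heatKernelTorus s y := by
  rw [torusAbs_eq_abs_sub_round]
  rcases abs_choice (y - 2 * π * round (y / (2 * π))) with h | h <;> rw [h]
  · rw [mul_comm]; exact (heatKernelTorus_periodic s).sub_int_mul_eq _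
  · rw [heatKernelTorus_even, mul_comm]; exact (heatKernelTorus_periodic s).sub_int_mul_eq _

theorem heatKernelTorus_eq_sqrt_mul_tsum (s y : ℝ) :
    heatKernelTorus s y =
      √(2 * π / s) * ∑' k : ℤ, exp (-(y + 2 * π * k) ^ 2 / (2 * s)) := by
  rw [heatKernelTorus, tsum_mul_left, ← mul_assoc]
  congr 1
  have h2π : (0 : ℝ) ≤ 2 * π := by positivity
  rw [sqrt_div h2π s, sqrt_mul h2π]
  nth_rw 1 [← mul_self_sqrt h2π]
  rw [mul_inv, div_eq_mul_inv]
  field_simp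

theorem antitoneOn_exp_neg_mul_sq {b : ℝ} (hb : 0 ≤ b) :
    AntitoneOn (fun x : ℝ => exp (-b * x ^ 2)) (Ici 0) := by
  intro x hx y _ hxy
  simp only [neg_mul, exp_le_exp, neg_le_neg_iff]
  gcongr

theorem summable_exp_neg_mul_natCast_sq {b : ℝ} (hb : 0 < b) :
    Summable fun n : ℕ => exp (-b * n ^ 2) :=
  (antitoneOn_exp_neg_mul_sq hb.le).summable_of_integrableOn_Ioi_zero
    (integrable_exp_neg_mul_sq hb).integrableOn fun _ _ => (exp_pos _).le

theorem tsum_exp_neg_mul_natCast_sq_le {b : ℝ} (hb : 0 < b) :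
    ∑' n : ℕ, exp (-b * n ^ 2) ≤ 1 + √(π / b) / 2 := by
  calc ∑' n : ℕ, exp (-b * n ^ 2)
      ≤ exp (-b * 0 ^ 2) + ∫ x in Ioi 0, exp (-b * x ^ 2) :=
        (antitoneOn_exp_neg_mul_sq hb.le).tsum_le_integral
          (integrable_exp_neg_mul_sq hb).integrableOn fun _ _ => (exp_pos _).le
    _ = 1 + √(π / b) / 2 := by rw [integral_gaussian_Ioi]; simp

theorem summable_int_of_le_nat {f : ℤ → ℝ} {g : ℕ → ℝ} (hf : ∀ k, 0 ≤ f k)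
    (hg : Summable g) (hpos : ∀ n : ℕ, f n ≤ g n) (hneg : ∀ n : ℕ, f (-(n + 1)) ≤ g n) :
    Summable f :=
  .of_nat_of_neg_add_one (hg.of_nonneg_of_le (fun _ => hf _) hpos)
    (hg.of_nonneg_of_le (fun _ => hf _) hneg)

theorem tsum_int_le_two_mul_tsum_nat {f : ℤ → ℝ} {g : ℕ → ℝ} (hf : ∀ k, 0 ≤ f k)
    (hg : Summable g) (hpos : ∀ n : ℕ, f n ≤ g n) (hneg : ∀ n : ℕ, f (-(n + 1)) ≤ g n) :
    ∑' k, f k ≤ 2 * ∑' n, g n := by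
  have hf_pos := hg.of_nonneg_of_le (fun _ => hf _) hpos
  have hf_neg := hg.of_nonneg_of_le (fun _ => hf _) hneg
  rw [tsum_of_nat_of_neg_add_one hf_pos hf_neg, two_mul]
  exact add_le_add (hf_pos.tsum_le_tsum hpos hg) (hf_neg.tsum_le_tsum hneg hg)

theorem exp_neg_sq_div_le_of_sq_add_sq_le {s a t x : ℝ} (hs : 0 < s)
    (h : a ^ 2 + (2 * π * t) ^ 2 ≤ x ^ 2) :
    exp (-x ^ 2 / (2 * s)) ≤ exp (-a ^ 2 / (2 * s)) * exp (-(2 * π ^ 2 / s) * t ^ 2) := by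
  rw [← exp_add, exp_le_exp,
    show -a ^ 2 / (2 * s) + -(2 * π ^ 2 / s) * t ^ 2 = -(a ^ 2 + (2 * π * t) ^ 2) / (2 * s) by
      field_simp; ring]
  exact div_le_div_of_nonneg_right (neg_le_neg h) (by positivity)

theorem exp_neg_sq_add_two_pi_mul_natCast_le {s a : ℝ} (hs : 0 < s) (ha : 0 ≤ a) (n : ℕ) :
    exp (-(a + 2 * π * ((n : ℤ) : ℝ)) ^ 2 / (2 * s)) ≤
      exp (-a ^ 2 / (2 * s)) * exp (-(2 * π ^ 2 / s) * (n : ℝ) ^ 2) := by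
  refine exp_neg_sq_div_le_of_sq_add_sq_le hs ?_
  push_cast
  nlinarith [mul_nonneg (mul_nonneg pi_pos.le ha) (Nat.cast_nonneg n : (0 : ℝ) ≤ n)]

theorem exp_neg_sq_sub_two_pi_mul_succ_le {s a : ℝ} (hs : 0 < s) (ha : 0 ≤ a) (ha' : a ≤ π)
    (n : ℕ) :
    exp (-(a + 2 * π * ((-(n + 1) : ℤ) : ℝ)) ^ 2 / (2 * s)) ≤
      exp (-a ^ 2 / (2 * s)) * exp (-(2 * π ^ 2 / s) * (n : ℝ) ^ 2) := by
  refine exp_neg_sq_div_le_of_sq_add_sq_le hs ?_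
  push_cast
  nlinarith [mul_nonneg (Nat.cast_nonneg n : (0 : ℝ) ≤ n) (by linarith : 0 ≤ 2 * π - a),
    mul_nonneg pi_pos.le (sub_nonneg.mpr ha')]

theorem summable_exp_neg_sq_add_two_pi_mul {s a : ℝ} (hs : 0 < s) (ha : 0 ≤ a)
    (ha' : a ≤ π) :
    Summable fun k : ℤ => exp (-(a + 2 * π * k) ^ 2 / (2 * s)) :=
  summable_int_of_le_nat (fun _ => (exp_pos _).le)
    ((summable_exp_neg_mul_natCast_sq (by positivity)).mul_left _)
    (exp_neg_sq_add_two_pi_mul_natCast_le hs ha) (exp_neg_sq_sub_two_pi_mul_succ_le hs ha ha')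

theorem tsum_exp_neg_sq_add_two_pi_mul_le {s a : ℝ} (hs : 0 < s) (ha : 0 ≤ a) (ha' : a ≤ π) :
    ∑' k : ℤ, exp (-(a + 2 * π * k) ^ 2 / (2 * s)) ≤
      (2 + √(s / (2 * π))) * exp (-a ^ 2 / (2 * s)) := by
  have hb : 0 < 2 * π ^ 2 / s := by positivity
  calc ∑' k : ℤ, exp (-(a + 2 * π * k) ^ 2 / (2 * s))
      ≤ 2 * ∑' n : ℕ, exp (-a ^ 2 / (2 * s)) * exp (-(2 * π ^ 2 / s) * (n : ℝ) ^ 2) :=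
        tsum_int_le_two_mul_tsum_nat (fun _ => (exp_pos _).le)
          ((summable_exp_neg_mul_natCast_sq hb).mul_left _)
          (exp_neg_sq_add_two_pi_mul_natCast_le hs ha) (exp_neg_sq_sub_two_pi_mul_succ_le hs ha ha')
    _ ≤ 2 * (exp (-a ^ 2 / (2 * s)) * (1 + √(π / (2 * π ^ 2 / s)) / 2)) := by
        rw [tsum_mul_left]
        gcongr
        exact tsum_exp_neg_mul_natCast_sq_le hb
    _ = (2 + √(s / (2 * π))) * exp (-a ^ 2 / (2 * s)) := by
        rw [show π / (2 * π ^ 2 / s) = s / (2 * π) by field_simp]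
        ring

/-- **Two-sided bounds for the periodic heat kernel:** for all `s > 0` and `y ∈ ℝ`,
`√(2π/s) exp(−|y|_𝕋²/(2s)) ≤ p_𝕋(s,y) ≤ 2 (1 + √(2π/s)) exp(−|y|_𝕋²/(2s))`. -/
theorem heatKernelTorus_two_sided_bounds (s : ℝ) (hs : 0 < s) (y : ℝ) :
    Real.sqrt (2 * π / s) * Real.exp (-(torusAbs y) ^ 2 / (2 * s)) ≤ heatKernelTorus s y ∧
      heatKernelTorus s y ≤
        2 * (1 + Real.sqrt (2 * π / s)) * Real.exp (-(torusAbs y) ^ 2 / (2 * s)) := by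
  rw [← heatKernelTorus_torusAbs, heatKernelTorus_eq_sqrt_mul_tsum]
  set a := torusAbs y
  have ha : 0 ≤ a := torusAbs_nonneg y
  have ha' : a ≤ π := torusAbs_le_pi y
  have hsqrt : √(2 * π / s) * √(s / (2 * π)) = 1 := by
    rw [← sqrt_mul (by positivity), div_mul_div_comm, mul_comm s, div_self (by positivity),
      sqrt_one]
  constructor
  · gcongr
    simpa using (summable_exp_neg_sq_add_two_pi_mul hs ha ha').le_tsum 0 fun _ _ => (exp_pos _).le
  · calc √(2 * π / s) * ∑' k : ℤ, exp (-(a + 2 * π * k) ^ 2 / (2 * s))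
        ≤ √(2 * π / s) * ((2 + √(s / (2 * π))) * exp (-a ^ 2 / (2 * s))) := by
          gcongr
          exact tsum_exp_neg_sq_add_two_pi_mul_le hs ha ha'
      _ = (2 * √(2 * π / s) + 1) * exp (-a ^ 2 / (2 * s)) := by
          linear_combination exp (-a ^ 2 / (2 * s)) * hsqrt
      _ ≤ 2 * (1 + √(2 * π / s)) * exp (-a ^ 2 / (2 * s)) := by
          gcongr
          linarith
end

section
/- For every T > 0 there exists a constant C_T > 0 such that for all t ∈ (0, T] and all x, y ∈ ℝ: | log p_𝕋(t, y) − log p_𝕋(t, y − x) | ≤ C_T · |x| / t. -/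
open Real

/-!
Up to a factor depending only on `t`, `p_𝕋(t, ·)` is the `2π`-periodization `S` of the Gaussian
`exp (-z² / 2t)`, so by the mean value theorem it suffices to bound the logarithmic derivative
`S' / S` by `C_T / t`. This ratio is `2π`-periodic, so we may take `|y| ≤ π`. There
`(y + 2πk)² ≥ y² + 4π² (k² - |k|)`, hence the `k`-th terms of `S` and of `S'` are dominated by
`exp (-y² / 2t)`, which is the `k = 0` term of `S`, times a weight that is summable in `k`
uniformly in `t ≤ T`.
-/

open Function

variable {s t T a y z : ℝ}

noncomputable def periodize (f : ℝ → ℝ) (y : ℝ) : ℝ := ∑' k : ℤ, f (y + 2 * π * k)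

theorem periodic_periodize (f : ℝ → ℝ) : Periodic (periodize f) (2 * π) := fun y => by
  rw [periodize, periodize, ← (Equiv.addRight (1 : ℤ)).tsum_eq (fun k : ℤ => f (y + 2 * π * k))]
  refine tsum_congr fun k => congr_arg f ?_
  push_cast [Equiv.coe_addRight]
  ring

noncomputable def gaussian (t z : ℝ) : ℝ := exp (-z ^ 2 / (2 * t))

theorem gaussian_pos (t z : ℝ) : 0 < gaussian t z := exp_pos _

theorem gaussian_le_one (ht : 0 < t) (z : ℝ) : gaussian t z ≤ 1 := by
  rw [gaussian, exp_le_one_iff]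
  exact div_nonpos_of_nonpos_of_nonneg (neg_nonpos.mpr (sq_nonneg z)) (by positivity)

theorem hasDerivAt_gaussian (t z : ℝ) :
    HasDerivAt (gaussian t) (-z / t * gaussian t z) z := by
  have h : HasDerivAt (fun x => -x ^ 2 / (2 * t)) (-(2 * z) / (2 * t)) z := by
    simpa using (hasDerivAt_pow 2 z).neg.div_const (2 * t)
  show HasDerivAt (fun x => exp (-x ^ 2 / (2 * t))) _ z
  convert h.exp using 1
  rw [gaussian]
  ring

-- The shape matches the bound in `summable_pow_mul_jacobiTheta₂_term_bound`.
noncomputable def thetaWeight (s a : ℝ) (k : ℤ) : ℝ :=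
  exp (-π * (2 * π / s * k ^ 2 - 2 * (a / s) * |(k : ℝ)|))

theorem thetaWeight_pos (s a : ℝ) (k : ℤ) : 0 < thetaWeight s a k := exp_pos _

theorem summable_pow_abs_mul_thetaWeight (hs : 0 < s) (a : ℝ) (n : ℕ) :
    Summable fun k : ℤ => |(k : ℝ)| ^ n * thetaWeight s a k := by
  simpa [thetaWeight] using
    summable_pow_mul_jacobiTheta₂_term_bound (a / s) (by positivity : 0 < 2 * π / s) n

theorem summable_thetaWeight (hs : 0 < s) (a : ℝ) : Summable (thetaWeight s a) := by
  simpa using summable_pow_abs_mul_thetaWeight hs a 0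

theorem summable_add_mul_abs_mul_thetaWeight (hs : 0 < s) (a b c : ℝ) :
    Summable fun k : ℤ => (b + c * |(k : ℝ)|) * thetaWeight s a k := by
  simpa [add_mul, mul_assoc] using ((summable_pow_abs_mul_thetaWeight hs a 0).mul_left b).add
    ((summable_pow_abs_mul_thetaWeight hs a 1).mul_left c)

theorem thetaWeight_pi_antitone (ht : 0 < t) (htT : t ≤ T) (k : ℤ) :
    thetaWeight t π k ≤ thetaWeight T π k := by
  have hk : 0 ≤ (k : ℝ) ^ 2 - |(k : ℝ)| :=
    sub_nonneg.mpr (by exact_mod_cast (Int.le_self_sq |k|).trans_eq (sq_abs k))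
  have h (s : ℝ) : thetaWeight s π k = exp (-(2 * π ^ 2 * ((k : ℝ) ^ 2 - |(k : ℝ)|) / s)) := by
    rw [thetaWeight]
    ring_nf
  rw [h, h, exp_le_exp, neg_le_neg_iff]
  gcongr

theorem sq_le_sq_add_two_pi_mul (hz : |z| ≤ a) (k : ℤ) :
    z ^ 2 + (4 * π ^ 2 * k ^ 2 - 4 * π * a * |(k : ℝ)|) ≤ (z + 2 * π * k) ^ 2 := by
  have hzk : -(a * |(k : ℝ)|) ≤ z * k := by
    rw [neg_le, ← neg_mul]
    calc -z * k ≤ |-z * k| := le_abs_self _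
      _ = |z| * |(k : ℝ)| := by rw [abs_mul, abs_neg]
      _ ≤ a * |(k : ℝ)| := by gcongr
  nlinarith [pi_pos]

theorem gaussian_add_two_pi_mul_le (ht : 0 < t) (hz : |z| ≤ a) (k : ℤ) :
    gaussian t (z + 2 * π * k) ≤ gaussian t z * thetaWeight t a k := by
  rw [gaussian, gaussian, thetaWeight, ← exp_add, exp_le_exp]
  have hsq := sq_le_sq_add_two_pi_mul hz k
  have e : -z ^ 2 / (2 * t) + -π * (2 * π / t * k ^ 2 - 2 * (a / t) * |(k : ℝ)|) =
      -(z ^ 2 + (4 * π ^ 2 * k ^ 2 - 4 * π * a * |(k : ℝ)|)) / (2 * t) := by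
    field_simp; ring
  rw [e]
  gcongr

theorem abs_deriv_gaussian_add_two_pi_mul_le (ht : 0 < t) (hz : |z| ≤ a) (k : ℤ) :
    |-(z + 2 * π * k) / t * gaussian t (z + 2 * π * k)| ≤
      gaussian t z / t * ((a + 2 * π * |(k : ℝ)|) * thetaWeight t a k) := by
  have habs : |z + 2 * π * k| ≤ a + 2 * π * |(k : ℝ)| := by
    refine (abs_add_le _ _).trans (add_le_add hz ?_)
    rw [abs_mul, abs_of_pos two_pi_pos]
  rw [abs_mul, abs_div, abs_neg, abs_of_pos ht, abs_of_pos (gaussian_pos _ _)]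
  calc |z + 2 * π * k| / t * gaussian t (z + 2 * π * k)
      ≤ (a + 2 * π * |(k : ℝ)|) / t * (gaussian t z * thetaWeight t a k) :=
        mul_le_mul (by gcongr) (gaussian_add_two_pi_mul_le ht hz k) (gaussian_pos _ _).le
          (by have := (abs_nonneg z).trans hz; positivity)
    _ = _ := by ring

theorem summable_gaussian_add_two_pi_mul (ht : 0 < t) (z : ℝ) :
    Summable fun k : ℤ => gaussian t (z + 2 * π * k) :=
  ((summable_thetaWeight ht |z|).mul_left (gaussian t z)).of_nonneg_of_le
    (fun _ => (gaussian_pos _ _).le) (gaussian_add_two_pi_mul_le ht le_rfl)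

theorem gaussian_le_periodize (ht : 0 < t) (y : ℝ) : gaussian t y ≤ periodize (gaussian t) y := by
  simpa [periodize] using (summable_gaussian_add_two_pi_mul ht y).le_tsum 0
    (fun _ _ => (gaussian_pos _ _).le)

theorem periodize_gaussian_pos (ht : 0 < t) (y : ℝ) : 0 < periodize (gaussian t) y :=
  (gaussian_pos t y).trans_le (gaussian_le_periodize ht y)

theorem hasDerivAt_periodize_gaussian (ht : 0 < t) (y : ℝ) :
    HasDerivAt (periodize (gaussian t)) (periodize (fun z => -z / t * gaussian t z) y) y := by
  have hu : Summable fun k : ℤ =>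
      1 / t * ((|y| + 1 + 2 * π * |(k : ℝ)|) * thetaWeight t (|y| + 1) k) :=
    (summable_add_mul_abs_mul_thetaWeight ht _ _ _).mul_left _
  refine hasDerivAt_tsum_of_isPreconnected hu Metric.isOpen_ball
    (convex_ball (0 : ℝ) (|y| + 1)).isPreconnected
    (fun k z _ => (hasDerivAt_gaussian t _).comp_add_const z _) (fun k z hz => ?_)
    (y₀ := y) (by simp) (summable_gaussian_add_two_pi_mul ht y) (by simp)
  rw [mem_ball_zero_iff, Real.norm_eq_abs] at hz
  refine (abs_deriv_gaussian_add_two_pi_mul_le ht hz.le k).trans ?_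
  refine mul_le_mul_of_nonneg_right (by gcongr; exact gaussian_le_one ht z) ?_
  exact mul_nonneg (by positivity) (thetaWeight_pos _ _ _).le

noncomputable def heatLogDerivConst (T : ℝ) : ℝ :=
  ∑' k : ℤ, (π + 2 * π * |(k : ℝ)|) * thetaWeight T π k

theorem heatLogDerivConst_pos (hT : 0 < T) : 0 < heatLogDerivConst T :=
  (summable_add_mul_abs_mul_thetaWeight hT π π (2 * π)).tsum_pos
    (fun k => mul_nonneg (by positivity) (thetaWeight_pos _ _ _).le) 0
    (mul_pos (by simp [pi_pos]) (thetaWeight_pos _ _ _))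

theorem abs_periodize_deriv_gaussian_le_of_abs_le_pi (ht : 0 < t) (htT : t ≤ T) (hy : |y| ≤ π) :
    |periodize (fun z => -z / t * gaussian t z) y| ≤
      heatLogDerivConst T / t * periodize (gaussian t) y := by
  have hsum : HasSum (fun k : ℤ => gaussian t y / t * ((π + 2 * π * |(k : ℝ)|) * thetaWeight T π k))
      (gaussian t y / t * heatLogDerivConst T) :=
    (summable_add_mul_abs_mul_thetaWeight (ht.trans_le htT) π π (2 * π)).hasSum.mul_left _
  calc |periodize (fun z => -z / t * gaussian t z) y|
      ≤ gaussian t y / t * heatLogDerivConst T := by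
        rw [← norm_eq_abs]
        refine tsum_of_norm_bounded hsum fun k =>
          (abs_deriv_gaussian_add_two_pi_mul_le ht hy k).trans ?_
        gcongr
        · exact div_nonneg (gaussian_pos t y).le ht.le
        · exact thetaWeight_pi_antitone ht htT k
    _ = heatLogDerivConst T / t * gaussian t y := by ring
    _ ≤ heatLogDerivConst T / t * periodize (gaussian t) y :=
        mul_le_mul_of_nonneg_left (gaussian_le_periodize ht y)
          (div_nonneg (heatLogDerivConst_pos (ht.trans_le htT)).le ht.le)

theorem abs_logDeriv_periodize_gaussian_le (ht : 0 < t) (htT : t ≤ T) (y : ℝ) :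
    |periodize (fun z => -z / t * gaussian t z) y / periodize (gaussian t) y| ≤
      heatLogDerivConst T / t := by
  obtain ⟨y', ⟨hy'l, hy'r⟩, hyy'⟩ :=
    ((periodic_periodize _).div (periodic_periodize (gaussian t))).exists_mem_Ico two_pi_pos y (-π)
  have hpos := periodize_gaussian_pos ht y'
  rw [Pi.div_apply, Pi.div_apply] at hyy'
  rw [hyy', abs_div, abs_of_pos hpos, div_le_iff₀ hpos]
  exact abs_periodize_deriv_gaussian_le_of_abs_le_pi ht htT (abs_le.mpr ⟨hy'l, by linarith⟩)

theorem log_heatKernelTorus (ht : 0 < t) (y : ℝ) :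
    log (heatKernelTorus t y) =
      log (2 * π * (√(2 * π * t))⁻¹) + log (periodize (gaussian t) y) := by
  rw [heatKernelTorus, tsum_mul_left, ← mul_assoc]
  exact log_mul (by positivity) (periodize_gaussian_pos ht y).ne'

/-- **Log-Lipschitz estimate for the periodic heat kernel:** for every `T > 0` there is
`C_T > 0` such that `|log p_𝕋(t,y) − log p_𝕋(t,y−x)| ≤ C_T |x| / t` for all
`t ∈ (0,T]` and `x, y ∈ ℝ`. -/
theorem heatKernelTorus_log_lipschitz (T : ℝ) (hT : 0 < T) :
    ∃ C : ℝ, 0 < C ∧ ∀ t : ℝ, t ∈ Set.Ioc 0 T → ∀ x y : ℝ,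
      |Real.log (heatKernelTorus t y) - Real.log (heatKernelTorus t (y - x))|
        ≤ C * |x| / t := by
  refine ⟨heatLogDerivConst T, heatLogDerivConst_pos hT, fun t ⟨ht, htT⟩ x y => ?_⟩
  have hmvt := convex_univ.norm_image_sub_le_of_norm_hasDerivWithin_le
    (f := fun z => log (periodize (gaussian t) z))
    (fun z _ => ((hasDerivAt_periodize_gaussian ht z).log
      (periodize_gaussian_pos ht z).ne').hasDerivWithinAt)
    (fun z _ => abs_logDeriv_periodize_gaussian_le ht htT z) (Set.mem_univ (y - x)) (Set.mem_univ y)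
  rw [log_heatKernelTorus ht, log_heatKernelTorus ht, add_sub_add_left_eq_sub]
  simpa [mul_div_right_comm] using hmvt
end

section
/- For every T > 0 there exists a constant C_T > 0, independent of the initial condition, with the following property. Let h̄ : ℝ → ℝ be continuous and 2π-periodic, and define w(t, x) = ∫_{−π}^{π} p_𝕋(t, x − y) · exp(h̄(y)) dy and h(t, x) = log w(t, x). Then for all t ∈ (0, T] and x ∈ ℝ: | h(t, x) − h(t, 0) | ≤ C_T · (1 + 1/t) · |x|. -/
/-!
Since `w(t,·)` is a positive superposition of translates of `p_𝕋(t,·)`, it suffices to prove the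
Harnack-type bound `p_𝕋(t, z + x) ≤ exp (C_T |x| / t) · p_𝕋(t, z)`; comparing `w(t,x)` with
`w(t,0)` in both directions and taking logarithms gives `|h(t,x) - h(t,0)| ≤ C_T |x| / t`.

By periodicity we may take `|z|, |x| ≤ π`. Write `u = z + 2πk`. For `|u| ≤ 3π` the Gaussian term
`exp (-(u + x)² / 2t)` is at most `exp (3π|x|/t) · exp (-u² / 2t)`. For `|u| ≥ 3π`, the bound
`eˢ ≤ 1 + s eˢ` shows that it exceeds `exp (-u² / 2t)` by at most `(|x|/t) |u| exp (-u² / 6t)`,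
and this is at most `3π (|x|/t) |k| exp (-k²/T)` times the `k = 0` term `exp (-z² / 2t)`.
Summing over `k` gives the factor `exp (3π|x|/t) + (|x|/t) · 3π ∑ |k| exp (-k²/T)`, which is at
most `exp (C_T |x| / t)` for `C_T = 3π (1 + ∑ |k| exp (-k²/T))`.
-/

open Real

noncomputable def periodizedGaussian (t y : ℝ) : ℝ :=
  ∑' k : ℤ, exp (-(y + 2 * π * k) ^ 2 / (2 * t))

lemma heatKernelTorus_eq (t y : ℝ) :
    heatKernelTorus t y = 2 * π * (√(2 * π * t))⁻¹ * periodizedGaussian t y := by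
  rw [heatKernelTorus, periodizedGaussian, tsum_mul_left]
  ring

-- The bound has the shape of `summable_pow_mul_jacobiTheta₂_term_bound`.
lemma exp_neg_add_two_pi_mul_sq_le {t R y : ℝ} (ht : 0 < t) (hy : |y| ≤ R) (k : ℤ) :
    exp (-(y + 2 * π * k) ^ 2 / (2 * t)) ≤
      exp (-π * (2 * π / t * k ^ 2 - 2 * (R / t) * |(k : ℝ)|)) := by
  have hyk : -(y * k) ≤ R * |(k : ℝ)| :=
    (neg_le_abs _).trans (by rw [abs_mul]; gcongr)
  rw [exp_le_exp, div_le_iff₀ (by positivity)]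
  field_simp
  nlinarith [pi_pos, sq_nonneg y]

lemma summable_exp_neg_add_two_pi_mul_sq {t : ℝ} (ht : 0 < t) (y : ℝ) :
    Summable fun k : ℤ => exp (-(y + 2 * π * k) ^ 2 / (2 * t)) :=
  .of_nonneg_of_le (fun _ => (exp_pos _).le) (exp_neg_add_two_pi_mul_sq_le ht le_rfl) <| by
    simpa using summable_pow_mul_jacobiTheta₂_term_bound (|y| / t) (by positivity : 0 < 2 * π / t) 0

lemma periodizedGaussian_pos {t : ℝ} (ht : 0 < t) (y : ℝ) : 0 < periodizedGaussian t y :=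
  (summable_exp_neg_add_two_pi_mul_sq ht y).tsum_pos (fun _ => (exp_pos _).le) 0 (exp_pos _)

lemma exp_neg_sq_div_le_periodizedGaussian {t : ℝ} (ht : 0 < t) (y : ℝ) :
    exp (-y ^ 2 / (2 * t)) ≤ periodizedGaussian t y := by
  simpa [periodizedGaussian] using
    (summable_exp_neg_add_two_pi_mul_sq ht y).le_tsum 0 (fun _ _ => (exp_pos _).le)

lemma periodizedGaussian_periodic (t : ℝ) : Function.Periodic (periodizedGaussian t) (2 * π) := by
  intro y
  unfold periodizedGaussian
  conv_rhs => rw [← (Equiv.addRight (1 : ℤ)).tsum_eq]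
  congr! 4 with k
  rw [Equiv.coe_addRight, Int.cast_add, Int.cast_one]
  ring

lemma continuous_periodizedGaussian {t : ℝ} (ht : 0 < t) : Continuous (periodizedGaussian t) := by
  refine continuous_iff_continuousAt.2 fun y₀ => ?_
  have hR : ∀ y ∈ Metric.ball y₀ 1, |y| ≤ |y₀| + 1 := fun y hy => by
    have := abs_sub_abs_le_abs_sub y y₀
    linarith [Metric.mem_ball.1 hy, Real.dist_eq y y₀]
  refine (continuousOn_tsum (fun k => by fun_prop) (u := fun k : ℤ =>
      exp (-π * (2 * π / t * k ^ 2 - 2 * ((|y₀| + 1) / t) * |(k : ℝ)|))) ?_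
      fun k y hy => ?_).continuousAt (Metric.isOpen_ball.mem_nhds (Metric.mem_ball_self one_pos))
  · simpa using summable_pow_mul_jacobiTheta₂_term_bound ((|y₀| + 1) / t)
      (by positivity : 0 < 2 * π / t) 0
  · rw [norm_of_nonneg (exp_pos _).le]
    exact exp_neg_add_two_pi_mul_sq_le ht (hR y hy) k

lemma heatKernelTorus_pos {t : ℝ} (ht : 0 < t) (y : ℝ) : 0 < heatKernelTorus t y := by
  rw [heatKernelTorus_eq]
  have := periodizedGaussian_pos ht y
  positivity

lemma continuous_heatKernelTorus {t : ℝ} (ht : 0 < t) : Continuous (heatKernelTorus t) := by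
  simp_rw [funext (heatKernelTorus_eq t)]
  exact continuous_const.mul (continuous_periodizedGaussian ht)

lemma exp_le_one_add_mul_exp (s : ℝ) : exp s ≤ 1 + s * exp s := by
  have h := mul_le_mul_of_nonneg_right (add_one_le_exp (-s)) (exp_pos s).le
  rw [← exp_add, neg_add_cancel, exp_zero] at h
  linarith

lemma exp_add_le_exp_add {a c : ℝ} (ha : 0 ≤ a) (hc : 0 ≤ c) : exp a + c ≤ exp (a + c) := by
  rw [exp_add]
  nlinarith [add_one_le_exp c, one_le_exp ha]

lemma exp_neg_sq_add_div_le {t : ℝ} (ht : 0 < t) (u x : ℝ) :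
    exp (-(u + x) ^ 2 / (2 * t)) ≤ exp (|x| * |u| / t) * exp (-u ^ 2 / (2 * t)) := by
  rw [← exp_add, exp_le_exp, ← sub_nonneg]
  have hxu : -(x * u) ≤ |x| * |u| := abs_mul x u ▸ neg_le_abs _
  have key : |x| * |u| / t + -u ^ 2 / (2 * t) - -(u + x) ^ 2 / (2 * t) =
      (2 * (|x| * |u| + x * u) + x ^ 2) / (2 * t) := by
    field_simp
    ring
  rw [key]
  exact div_nonneg (by nlinarith [sq_nonneg x]) (by positivity)

lemma exp_neg_sq_add_div_le_of_three_pi_le {t u x : ℝ} (ht : 0 < t) (hx : |x| ≤ π)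
    (hu : 3 * π ≤ |u|) :
    exp (-(u + x) ^ 2 / (2 * t)) ≤
      exp (-u ^ 2 / (2 * t)) + |x| / t * (|u| * exp (-u ^ 2 / (6 * t))) := by
  set s := |x| * |u| / t
  have hdecay : exp s * exp (-u ^ 2 / (2 * t)) ≤ exp (-u ^ 2 / (6 * t)) := by
    rw [← exp_add, exp_le_exp, ← sub_nonneg]
    have key : -u ^ 2 / (6 * t) - (s + -u ^ 2 / (2 * t)) = |u| * (|u| - 3 * |x|) / (3 * t) := by
      rw [← sq_abs u]
      simp only [s]
      field_simp
      ring
    rw [key]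
    exact div_nonneg (mul_nonneg (abs_nonneg _) (by linarith)) (by positivity)
  calc exp (-(u + x) ^ 2 / (2 * t))
      ≤ exp s * exp (-u ^ 2 / (2 * t)) := exp_neg_sq_add_div_le ht u x
    _ ≤ (1 + s * exp s) * exp (-u ^ 2 / (2 * t)) := by gcongr; exact exp_le_one_add_mul_exp s
    _ = exp (-u ^ 2 / (2 * t)) + s * (exp s * exp (-u ^ 2 / (2 * t))) := by ring
    _ ≤ exp (-u ^ 2 / (2 * t)) + s * exp (-u ^ 2 / (6 * t)) := by gcongr
    _ = exp (-u ^ 2 / (2 * t)) + |x| / t * (|u| * exp (-u ^ 2 / (6 * t))) := by ring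

lemma abs_mul_exp_neg_sq_div_le {T t z : ℝ} (ht : 0 < t) (htT : t ≤ T) (hz : |z| ≤ π) (k : ℤ)
    (hu : 3 * π ≤ |z + 2 * π * k|) :
    |z + 2 * π * k| * exp (-(z + 2 * π * k) ^ 2 / (6 * t)) ≤
      3 * π * (|(k : ℝ)| * exp (-(k : ℝ) ^ 2 / T)) * exp (-z ^ 2 / (2 * t)) := by
  set u := z + 2 * π * k
  have h2πk : |2 * π * k| = 2 * π * |(k : ℝ)| := by
    rw [abs_mul, abs_of_pos (by positivity : (0 : ℝ) < 2 * π)]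
  have hu_le : |u| ≤ |z| + 2 * π * |(k : ℝ)| := h2πk ▸ abs_add_le z _
  have hu_ge : 2 * π * |(k : ℝ)| ≤ |u| + |z| := by
    have := abs_sub u z
    rwa [add_sub_cancel_left, h2πk] at this
  have hk : 1 ≤ |(k : ℝ)| := by nlinarith [pi_pos]
  have hu_le' : |u| ≤ 3 * π * |(k : ℝ)| := by nlinarith [pi_pos]
  have hk_sq : 9 * (k : ℝ) ^ 2 ≤ u ^ 2 := by
    have : π * |(k : ℝ)| ≤ |u| := by nlinarith [pi_pos]
    have hsq := pow_le_pow_left₀ (by positivity) this 2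
    rw [mul_pow, sq_abs, sq_abs] at hsq
    have hπ : 9 ≤ π ^ 2 := by nlinarith [pi_gt_three]
    nlinarith [mul_le_mul_of_nonneg_right hπ (sq_nonneg (k : ℝ))]
  have hz_sq : 9 * z ^ 2 ≤ u ^ 2 := by
    nlinarith [sq_abs u, sq_abs z, abs_nonneg z, mul_le_mul hz hz (abs_nonneg z) pi_pos.le]
  have hdecay : exp (-u ^ 2 / (6 * t)) ≤ exp (-(k : ℝ) ^ 2 / T) * exp (-z ^ 2 / (2 * t)) := by
    have hkT : -(k : ℝ) ^ 2 / t ≤ -(k : ℝ) ^ 2 / T := by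
      simp only [neg_div, neg_le_neg_iff]
      exact div_le_div_of_nonneg_left (sq_nonneg _) ht htT
    have key : (-(k : ℝ) ^ 2 / t + -z ^ 2 / (2 * t)) - -u ^ 2 / (6 * t) =
        (u ^ 2 - 6 * (k : ℝ) ^ 2 - 3 * z ^ 2) / (6 * t) := by
      field_simp
      ring
    have : 0 ≤ (u ^ 2 - 6 * (k : ℝ) ^ 2 - 3 * z ^ 2) / (6 * t) :=
      div_nonneg (by linarith) (by positivity)
    rw [← exp_add, exp_le_exp]
    linarith
  calc |u| * exp (-u ^ 2 / (6 * t))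
      ≤ 3 * π * |(k : ℝ)| * (exp (-(k : ℝ) ^ 2 / T) * exp (-z ^ 2 / (2 * t))) := by gcongr
    _ = 3 * π * (|(k : ℝ)| * exp (-(k : ℝ) ^ 2 / T)) * exp (-z ^ 2 / (2 * t)) := by ring

lemma periodizedGaussian_term_add_le {T t z x : ℝ} (ht : 0 < t) (htT : t ≤ T) (hz : |z| ≤ π)
    (hx : |x| ≤ π) (k : ℤ) :
    exp (-(z + x + 2 * π * k) ^ 2 / (2 * t)) ≤
      exp (3 * π * |x| / t) * exp (-(z + 2 * π * k) ^ 2 / (2 * t)) +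
        3 * π * (|x| / t) * exp (-z ^ 2 / (2 * t)) * (|(k : ℝ)| * exp (-(k : ℝ) ^ 2 / T)) := by
  rw [show z + x + 2 * π * k = z + 2 * π * k + x by ring]
  set u := z + 2 * π * k
  rcases le_or_gt |u| (3 * π) with hnear | hfar
  · calc exp (-(u + x) ^ 2 / (2 * t))
        ≤ exp (|x| * |u| / t) * exp (-u ^ 2 / (2 * t)) := exp_neg_sq_add_div_le ht u x
      _ ≤ exp (3 * π * |x| / t) * exp (-u ^ 2 / (2 * t)) := by
          have : |x| * |u| ≤ 3 * π * |x| := by nlinarith [abs_nonneg x]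
          gcongr exp (?_ / _) * _
      _ ≤ _ := le_add_of_nonneg_right (by positivity)
  · calc exp (-(u + x) ^ 2 / (2 * t))
        ≤ exp (-u ^ 2 / (2 * t)) + |x| / t * (|u| * exp (-u ^ 2 / (6 * t))) :=
          exp_neg_sq_add_div_le_of_three_pi_le ht hx hfar.le
      _ ≤ exp (3 * π * |x| / t) * exp (-u ^ 2 / (2 * t)) +
            |x| / t * (3 * π * (|(k : ℝ)| * exp (-(k : ℝ) ^ 2 / T)) * exp (-z ^ 2 / (2 * t))) := by
          gcongr ?_ + _ * ?_
          · exact le_mul_of_one_le_left (exp_pos _).le (one_le_exp (by positivity))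
          · exact abs_mul_exp_neg_sq_div_le ht htT hz k hfar.le
      _ = _ := by ring

noncomputable def harnackConst (T : ℝ) : ℝ :=
  3 * π * (1 + ∑' k : ℤ, |(k : ℝ)| * exp (-(k : ℝ) ^ 2 / T))

lemma summable_abs_mul_exp_neg_sq_div {T : ℝ} (hT : 0 < T) :
    Summable fun k : ℤ => |(k : ℝ)| * exp (-(k : ℝ) ^ 2 / T) := by
  convert summable_pow_mul_jacobiTheta₂_term_bound 0 (by positivity : 0 < 1 / (π * T)) 1
    using 3 with k
  · simp
  · field_simp
    simp

lemma harnackConst_pos (T : ℝ) : 0 < harnackConst T := by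
  have : 0 ≤ ∑' k : ℤ, |(k : ℝ)| * exp (-(k : ℝ) ^ 2 / T) := tsum_nonneg fun _ => by positivity
  unfold harnackConst
  positivity

lemma periodizedGaussian_add_le_of_abs_le_pi {T t z x : ℝ} (hT : 0 < T) (ht : 0 < t)
    (htT : t ≤ T) (hz : |z| ≤ π) (hx : |x| ≤ π) :
    periodizedGaussian t (z + x) ≤ exp (harnackConst T * |x| / t) * periodizedGaussian t z := by
  set S := ∑' k : ℤ, |(k : ℝ)| * exp (-(k : ℝ) ^ 2 / T)
  have hS := summable_abs_mul_exp_neg_sq_div hT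
  have hG := summable_exp_neg_add_two_pi_mul_sq ht z
  have hG0 := (periodizedGaussian_pos ht z).le
  have hsum : periodizedGaussian t (z + x) ≤ exp (3 * π * |x| / t) * periodizedGaussian t z +
      3 * π * (|x| / t) * exp (-z ^ 2 / (2 * t)) * S := by
    rw [periodizedGaussian, periodizedGaussian, ← tsum_mul_left, ← tsum_mul_left,
      ← (hG.mul_left _).tsum_add (hS.mul_left _)]
    exact (summable_exp_neg_add_two_pi_mul_sq ht (z + x)).tsum_le_tsum
      (periodizedGaussian_term_add_le ht htT hz hx) ((hG.mul_left _).add (hS.mul_left _))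
  calc periodizedGaussian t (z + x)
      ≤ exp (3 * π * |x| / t) * periodizedGaussian t z +
          3 * π * (|x| / t) * exp (-z ^ 2 / (2 * t)) * S := hsum
    _ ≤ exp (3 * π * |x| / t) * periodizedGaussian t z +
          3 * π * (|x| / t) * periodizedGaussian t z * S := by
        gcongr
        exact exp_neg_sq_div_le_periodizedGaussian ht z
    _ = (exp (3 * π * |x| / t) + 3 * π * S * |x| / t) * periodizedGaussian t z := by ring
    _ ≤ exp (3 * π * |x| / t + 3 * π * S * |x| / t) * periodizedGaussian t z := by
        gcongr
        exact exp_add_le_exp_add (by positivity) (by positivity)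
    _ = exp (3 * π * (1 + S) * |x| / t) * periodizedGaussian t z := by ring_nf

lemma exists_abs_sub_int_mul_two_pi_le (x : ℝ) :
    ∃ n : ℤ, |x - n * (2 * π)| ≤ π ∧ |x - n * (2 * π)| ≤ |x| := by
  by_cases hx : |x| ≤ π
  · exact ⟨0, by simpa using hx⟩
  · have h := abs_sub_round (x / (2 * π))
    have hx' : x - round (x / (2 * π)) * (2 * π) =
        (x / (2 * π) - round (x / (2 * π))) * (2 * π) := by
      field_simp
    have hle : |x - round (x / (2 * π)) * (2 * π)| ≤ π := by
      rw [hx', abs_mul, abs_of_pos (by positivity : (0 : ℝ) < 2 * π)]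
      nlinarith [pi_pos]
    exact ⟨_, hle, hle.trans (not_le.1 hx).le⟩

lemma periodizedGaussian_add_le {T t : ℝ} (hT : 0 < T) (ht : 0 < t) (htT : t ≤ T) (z x : ℝ) :
    periodizedGaussian t (z + x) ≤ exp (harnackConst T * |x| / t) * periodizedGaussian t z := by
  obtain ⟨m, hm, -⟩ := exists_abs_sub_int_mul_two_pi_le z
  obtain ⟨n, hn, hnx⟩ := exists_abs_sub_int_mul_two_pi_le x
  have hper := periodizedGaussian_periodic t
  have hK := (harnackConst_pos T).le
  calc periodizedGaussian t (z + x)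
      = periodizedGaussian t (z - m * (2 * π) + (x - n * (2 * π))) := by
        rw [← hper.sub_int_mul_eq (m + n)]
        push_cast
        ring_nf
    _ ≤ exp (harnackConst T * |x - n * (2 * π)| / t) * periodizedGaussian t (z - m * (2 * π)) :=
        periodizedGaussian_add_le_of_abs_le_pi hT ht htT hm hn
    _ ≤ exp (harnackConst T * |x| / t) * periodizedGaussian t z := by
        rw [hper.sub_int_mul_eq]
        gcongr
        exact (periodizedGaussian_pos ht z).le

lemma heatKernelTorus_add_le {T t : ℝ} (hT : 0 < T) (ht : 0 < t) (htT : t ≤ T) (z x : ℝ) :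
    heatKernelTorus t (z + x) ≤ exp (harnackConst T * |x| / t) * heatKernelTorus t z := by
  rw [heatKernelTorus_eq, heatKernelTorus_eq, mul_left_comm]
  gcongr
  exact periodizedGaussian_add_le hT ht htT z x

lemma abs_log_sub_log_le {a b c : ℝ} (ha : 0 < a) (hb : 0 < b) (hab : a ≤ exp c * b)
    (hba : b ≤ exp c * a) : |log a - log b| ≤ c := by
  have h₁ := log_le_log ha hab
  have h₂ := log_le_log hb hba
  rw [log_mul (exp_pos c).ne' hb.ne', log_exp] at h₁
  rw [log_mul (exp_pos c).ne' ha.ne', log_exp] at h₂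
  exact abs_sub_le_iff.2 ⟨by linarith, by linarith⟩

section HeatFlow

variable {T t : ℝ} {φ : ℝ → ℝ}

lemma intervalIntegrable_heatKernelTorus_mul (ht : 0 < t) (hφ : Continuous φ) (x a b : ℝ) :
    IntervalIntegrable (fun y => heatKernelTorus t (x - y) * φ y) MeasureTheory.volume a b :=
  (((continuous_heatKernelTorus ht).comp (continuous_sub_left x)).mul hφ).intervalIntegrable _ _

lemma integral_heatKernelTorus_mul_pos (ht : 0 < t) (hφ : Continuous φ) (hφ0 : ∀ y, 0 < φ y)
    (x : ℝ) : 0 < ∫ y in (-π)..π, heatKernelTorus t (x - y) * φ y :=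
  intervalIntegral.intervalIntegral_pos_of_pos_on
    (intervalIntegrable_heatKernelTorus_mul ht hφ x _ _)
    (fun y _ => mul_pos (heatKernelTorus_pos ht _) (hφ0 y)) (by linarith [pi_pos])

lemma integral_heatKernelTorus_mul_le (hT : 0 < T) (ht : 0 < t) (htT : t ≤ T) (hφ : Continuous φ)
    (hφ0 : ∀ y, 0 ≤ φ y) (x x' : ℝ) :
    ∫ y in (-π)..π, heatKernelTorus t (x - y) * φ y ≤
      exp (harnackConst T * |x - x'| / t) * ∫ y in (-π)..π, heatKernelTorus t (x' - y) * φ y := by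
  rw [← intervalIntegral.integral_const_mul]
  refine intervalIntegral.integral_mono (by linarith [pi_pos])
    (intervalIntegrable_heatKernelTorus_mul ht hφ x _ _)
    ((intervalIntegrable_heatKernelTorus_mul ht hφ x' _ _).const_mul _) fun y => ?_
  have hK := heatKernelTorus_add_le hT ht htT (x' - y) (x - x')
  rw [sub_add_sub_cancel'] at hK
  rw [← mul_assoc]
  exact mul_le_mul_of_nonneg_right hK (hφ0 y)

end HeatFlow

/-- **Oscillation bound for KPZ without forcing.** For every `T > 0` there is
`C_T > 0`, independent of the initial condition, such that for every continuous
`2π`-periodic `h̄`, the Cole–Hopf solution `h(t,x) = log ∫_{−π}^{π} p_𝕋(t,x−y) e^{h̄(y)} dy`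
of the forcing-free KPZ equation satisfies
`|h(t,x) − h(t,0)| ≤ C_T (1 + 1/t) |x|` for all `t ∈ (0,T]` and `x ∈ ℝ`. -/
theorem kpz_no_forcing_oscillation (T : ℝ) (hT : 0 < T) :
    ∃ C : ℝ, 0 < C ∧
      ∀ hbar : ℝ → ℝ, Continuous hbar → Function.Periodic hbar (2 * π) →
      ∀ h : ℝ → ℝ → ℝ,
        (∀ t x, h t x =
          Real.log (∫ y in (-π)..π, heatKernelTorus t (x - y) * Real.exp (hbar y))) →
      ∀ t : ℝ, t ∈ Set.Ioc 0 T → ∀ x : ℝ,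
        |h t x - h t 0| ≤ C * (1 + 1 / t) * |x| := by
  refine ⟨harnackConst T, harnackConst_pos T, fun hbar hcont _ h hh t ⟨ht, htT⟩ x => ?_⟩
  have hφ : Continuous fun y => exp (hbar y) := by fun_prop
  have hle := integral_heatKernelTorus_mul_le hT ht htT hφ fun _ => (exp_pos _).le
  have hpos := integral_heatKernelTorus_mul_pos ht hφ fun _ => exp_pos _
  have hK := mul_nonneg (harnackConst_pos T).le (abs_nonneg x)
  rw [hh, hh]
  calc _ ≤ harnackConst T * |x| / t :=
        abs_log_sub_log_le (hpos x) (hpos 0) (by simpa using hle x 0) (by simpa using hle 0 x)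
    _ ≤ harnackConst T * |x| + harnackConst T * |x| / t := le_add_of_nonneg_left hK
    _ = harnackConst T * (1 + 1 / t) * |x| := by ring
end

section
/- For all 0 < τ < T there exists a constant C = C(τ, T) > 0, independent of the initial condition, with the following property. Let h̄ : ℝ → ℝ be continuous and 2π-periodic, define w(t, x) = ∫_{−π}^{π} p_𝕋(t, x − y) · exp(h̄(y)) dy and h(t, x) = log w(t, x). Then sup { |h(t, x) − h(s, y)| : τ ≤ s ≤ t ≤ T, x, y ∈ ℝ } ≤ C. -/
open Real

/-! The periodic heat kernel is, up to the factor `2π / √(2πs)`, the theta kernel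
`evenKernel (y / 2π) (2π / s)`. Reducing `y / 2π` modulo `1` to `|a| ≤ 1/2`, the `n = 0` term
bounds it below, and since `n² ≤ 4 (n + a)²` it is bounded above termwise by `evenKernel 0`. So for
`τ ≤ s ≤ T` the kernel lies between constants `0 < m ≤ M`, every `w(t, x)` lies between
`m ∫ e^h̄` and `M ∫ e^h̄`, and the oscillation of `h = log w` is at most `log M - log m`. -/

namespace HurwitzZeta

lemma exists_abs_le_half_coe_eq (a : UnitAddCircle) :
    ∃ b : ℝ, |b| ≤ 1 / 2 ∧ (b : UnitAddCircle) = a := by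
  induction a using QuotientAddGroup.induction_on with
  | H a =>
    refine ⟨a - round a, abs_sub_round a, ?_⟩
    rw [AddCircle.coe_sub, sub_eq_self, AddCircle.coe_eq_zero_iff]
    exact ⟨round a, by simp⟩

lemma continuous_evenKernel_coe {x : ℝ} (hx : 0 < x) :
    Continuous fun a : ℝ ↦ evenKernel a x := by
  have h (a : ℝ) : evenKernel a x =
      (Complex.exp (-π * a ^ 2 * x) * jacobiTheta₂ (a * Complex.I * x) (Complex.I * x)).re := by
    rw [← evenKernel_def, Complex.ofReal_re]
  simp_rw [h]
  refine Complex.continuous_re.comp (.mul (by fun_prop) ?_)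
  exact continuous_iff_continuousAt.2 fun a ↦
    (differentiableAt_jacobiTheta₂_fst _ (by simpa)).continuousAt.comp (by fun_prop)

lemma exp_neg_mul_sq_le_evenKernel (a : ℝ) {x : ℝ} (hx : 0 < x) :
    rexp (-π * a ^ 2 * x) ≤ evenKernel a x := by
  simpa using le_hasSum (hasSum_int_evenKernel a hx) 0 fun n _ ↦ (exp_pos _).le

lemma sq_le_four_mul_sq_int_add {a : ℝ} (ha : |a| ≤ 1 / 2) (n : ℤ) :
    (n : ℝ) ^ 2 ≤ 4 * (n + a) ^ 2 := by
  rcases eq_or_ne n 0 with rfl | hn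
  · simpa using sq_nonneg a
  · have h1 : (1 : ℝ) ≤ |(n : ℝ)| := by exact_mod_cast Int.one_le_abs hn
    have h2 : |(n : ℝ)| ≤ 2 * |(n : ℝ) + a| := by
      have := abs_sub_abs_le_abs_sub (n : ℝ) (-a)
      rw [abs_neg, sub_neg_eq_add] at this
      linarith
    rw [← sq_abs, ← sq_abs ((n : ℝ) + a)]
    nlinarith [abs_nonneg ((n : ℝ) + a)]

lemma evenKernel_le_evenKernel_zero_of_abs_le_half {a : ℝ} (ha : |a| ≤ 1 / 2) {x₀ x : ℝ}
    (hx₀ : 0 < x₀) (hx : x₀ ≤ x) : evenKernel a x ≤ evenKernel 0 (x₀ / 4) := by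
  refine hasSum_le (fun n ↦ ?_) (hasSum_int_evenKernel a (hx₀.trans_le hx))
    (by simpa using hasSum_int_evenKernel 0 (by positivity : 0 < x₀ / 4))
  rw [exp_le_exp, neg_mul, neg_mul, neg_le_neg_iff]
  calc π * (n : ℝ) ^ 2 * (x₀ / 4) ≤ π * (4 * (n + a) ^ 2) * (x₀ / 4) := by
        gcongr; exact sq_le_four_mul_sq_int_add ha n
    _ = π * (n + a) ^ 2 * x₀ := by ring
    _ ≤ π * (n + a) ^ 2 * x := by gcongr

lemma exp_neg_pi_mul_div_four_le_evenKernel (a : UnitAddCircle) {x x₁ : ℝ} (hx : 0 < x)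
    (hx₁ : x ≤ x₁) : rexp (-π * x₁ / 4) ≤ evenKernel a x := by
  obtain ⟨b, hb, rfl⟩ := exists_abs_le_half_coe_eq a
  refine le_trans ?_ (exp_neg_mul_sq_le_evenKernel b hx)
  simp only [exp_le_exp, neg_mul, neg_div, neg_le_neg_iff]
  have hb2 : b ^ 2 ≤ 1 / 4 := by nlinarith [sq_abs b, abs_nonneg b]
  calc π * b ^ 2 * x ≤ π * (1 / 4) * x₁ := by gcongr
    _ = π * x₁ / 4 := by ring

lemma evenKernel_le_evenKernel_zero (a : UnitAddCircle) {x₀ x : ℝ} (hx₀ : 0 < x₀)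
    (hx : x₀ ≤ x) : evenKernel a x ≤ evenKernel 0 (x₀ / 4) := by
  obtain ⟨b, hb, rfl⟩ := exists_abs_le_half_coe_eq a
  exact evenKernel_le_evenKernel_zero_of_abs_le_half hb hx₀ hx

end HurwitzZeta

open HurwitzZeta

lemma heatKernelTorus_eq_evenKernel {s : ℝ} (hs : 0 < s) (y : ℝ) :
    heatKernelTorus s y =
      2 * π * (√(2 * π * s))⁻¹ * evenKernel ↑(y / (2 * π)) (2 * π / s) := by
  have hterm (k : ℤ) : rexp (-(y + 2 * π * k) ^ 2 / (2 * s)) =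
      rexp (-π * (k + y / (2 * π)) ^ 2 * (2 * π / s)) := by
    congr 1
    field_simp
    ring
  rw [heatKernelTorus, tsum_mul_left, ← (hasSum_int_evenKernel _ (by positivity)).tsum_eq]
  simp_rw [hterm]
  ring

lemma continuous_heatKernelTorus_s14 {s : ℝ} (hs : 0 < s) : Continuous (heatKernelTorus s) := by
  simp_rw [funext (heatKernelTorus_eq_evenKernel hs)]
  exact continuous_const.mul
    ((continuous_evenKernel_coe (by positivity)).comp (continuous_id.div_const (2 * π)))

lemma exists_pos_bounds_heatKernelTorus {τ T : ℝ} (hτ : 0 < τ) (hτT : τ ≤ T) :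
    ∃ m M : ℝ, 0 < m ∧ ∀ s ∈ Set.Icc τ T, ∀ y,
      m ≤ heatKernelTorus s y ∧ heatKernelTorus s y ≤ M := by
  have hT : 0 < T := hτ.trans_le hτT
  refine ⟨2 * π * (√(2 * π * T))⁻¹ * rexp (-π * (2 * π / τ) / 4),
    2 * π * (√(2 * π * τ))⁻¹ * evenKernel 0 (2 * π / T / 4), by positivity,
    fun s ⟨hτs, hsT⟩ y ↦ ?_⟩
  have hs := hτ.trans_le hτs
  rw [heatKernelTorus_eq_evenKernel hs]
  constructor
  · gcongr
    · exact exp_neg_pi_mul_div_four_le_evenKernel _ (by positivity) (by gcongr)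
  · gcongr
    · exact (exp_pos _).le.trans (exp_neg_pi_mul_div_four_le_evenKernel _ (by positivity) le_rfl)
    · exact evenKernel_le_evenKernel_zero _ (by positivity) (by gcongr)

lemma integral_mul_mem_Icc_of_mem_Icc {K f : ℝ → ℝ} {a b m M : ℝ} (hab : a ≤ b)
    (hK : Continuous K) (hf : Continuous f) (hf0 : ∀ y ∈ Set.Icc a b, 0 ≤ f y)
    (hKmM : ∀ y ∈ Set.Icc a b, m ≤ K y ∧ K y ≤ M) :
    ∫ y in a..b, K y * f y ∈ Set.Icc (m * ∫ y in a..b, f y) (M * ∫ y in a..b, f y) := by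
  rw [← intervalIntegral.integral_const_mul, ← intervalIntegral.integral_const_mul]
  have hint {g : ℝ → ℝ} (hg : Continuous g) : IntervalIntegrable g MeasureTheory.volume a b :=
    hg.intervalIntegrable a b
  exact ⟨intervalIntegral.integral_mono_on hab (hint (by fun_prop)) (hint (by fun_prop))
      fun y hy ↦ mul_le_mul_of_nonneg_right (hKmM y hy).1 (hf0 y hy),
    intervalIntegral.integral_mono_on hab (hint (by fun_prop)) (hint (by fun_prop))
      fun y hy ↦ mul_le_mul_of_nonneg_right (hKmM y hy).2 (hf0 y hy)⟩

lemma abs_log_sub_log_le_of_mem_Icc {m M c A B : ℝ} (hm : 0 < m) (hc : 0 < c)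
    (hA : A ∈ Set.Icc (m * c) (M * c)) (hB : B ∈ Set.Icc (m * c) (M * c)) :
    |log A - log B| ≤ log M - log m := by
  have hM : 0 < M := pos_of_mul_pos_left ((mul_pos hm hc).trans_le (hA.1.trans hA.2)) hc.le
  have hlog {D : ℝ} (hD : D ∈ Set.Icc (m * c) (M * c)) :
      log m + log c ≤ log D ∧ log D ≤ log M + log c := by
    rw [← log_mul hm.ne' hc.ne', ← log_mul hM.ne' hc.ne']
    exact ⟨log_le_log (by positivity) hD.1, log_le_log ((mul_pos hm hc).trans_le hD.1) hD.2⟩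
  have := hlog hA
  have := hlog hB
  rw [abs_sub_le_iff]
  constructor <;> linarith

/-- **Space-time oscillation bound for KPZ without forcing.** For all `0 < τ < T`
there is `C = C(τ,T) > 0`, independent of the initial condition, such that for every
continuous `2π`-periodic `h̄`, the Cole–Hopf solution
`h(t,x) = log ∫_{−π}^{π} p_𝕋(t,x−y) e^{h̄(y)} dy` satisfies
`|h(t,x) − h(s,y)| ≤ C` whenever `τ ≤ s ≤ t ≤ T` and `x, y ∈ ℝ`. -/
theorem kpz_no_forcing_spacetime_oscillation (τ T : ℝ) (hτ : 0 < τ) (hτT : τ < T) :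
    ∃ C : ℝ, 0 < C ∧
      ∀ hbar : ℝ → ℝ, Continuous hbar → Function.Periodic hbar (2 * π) →
      ∀ h : ℝ → ℝ → ℝ,
        (∀ t x, h t x =
          Real.log (∫ y in (-π)..π, heatKernelTorus t (x - y) * Real.exp (hbar y))) →
      ∀ s t : ℝ, τ ≤ s → s ≤ t → t ≤ T → ∀ x y : ℝ,
        |h t x - h s y| ≤ C := by
  obtain ⟨m, M, hm, hK⟩ := exists_pos_bounds_heatKernelTorus hτ hτT.le
  refine ⟨max (log M - log m) 1, lt_max_of_lt_right one_pos,
    fun hbar hcont _ h hh s t hτs hst htT x y ↦ ?_⟩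
  have hπ : -π < π := neg_lt_self pi_pos
  have hI : 0 < ∫ y in (-π)..π, rexp (hbar y) :=
    intervalIntegral.intervalIntegral_pos_of_pos (hcont.rexp.intervalIntegrable _ _)
      (fun _ ↦ exp_pos _) hπ
  have hw {u : ℝ} (hu : u ∈ Set.Icc τ T) (z : ℝ) :
      ∫ y in (-π)..π, heatKernelTorus u (z - y) * rexp (hbar y) ∈
        Set.Icc (m * ∫ y in (-π)..π, rexp (hbar y)) (M * ∫ y in (-π)..π, rexp (hbar y)) :=
    integral_mul_mem_Icc_of_mem_Icc hπ.le
      ((continuous_heatKernelTorus_s14 (hτ.trans_le hu.1)).comp (continuous_sub_left z))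
      hcont.rexp (fun _ _ ↦ (exp_pos _).le) fun y _ ↦ hK u hu (z - y)
  rw [hh, hh]
  exact (abs_log_sub_log_le_of_mem_Icc hm hI (hw ⟨hτs.trans hst, htT⟩ x)
    (hw ⟨hτs, hst.trans htT⟩ y)).trans (le_max_left _ _)
end
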